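/- For every g ∈ G with g ∘ τ_h = τ_h ∘ g one has g ∘ h ∘ g⁻¹ = h or g ∘ h ∘ g⁻¹ = −h; moreover there exists g ∈ G^{τ_h} with g ∘ h ∘ g⁻¹ = −h, namely g = diag(−1,−1,1,…,1). Hence Ad(G^{τ_h})h = {h, −h} and G^{τ_h} ∖ G^h = {g ∈ G^{τ_h} : g ∘ h ∘ g⁻¹ = −h}. -/

import Mathlib

noncomputable section

/-- `V = ℝ^{d+1}`. -/
abbrev Vd (d : ℕ) : Type := Fin (d + 1) → ℝ

/-- The symmetric bilinear form `β(x,y) = x₀y₀ + x₁y₁ − x₂y₂ − ⋯ − x_dy_d`. -/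
def betaB (d : ℕ) (x y : Vd d) : ℝ :=
  ∑ j : Fin (d + 1), (if (j : ℕ) ≤ 1 then (1 : ℝ) else -1) * x j * y j

abbrev Mat (d : ℕ) : Type := Matrix (Fin (d + 1)) (Fin (d + 1)) ℝ

/-- The group `O(β)` of linear automorphisms of `V` preserving `β`,
as a set of matrices (with the subspace topology of `End(V)`). -/
def Obeta (d : ℕ) : Set (Mat d) :=
  {g | IsUnit g ∧ ∀ x y : Vd d, betaB d (g.mulVec x) (g.mulVec y) = betaB d x y}

/-- `G = SO_{2,d-1}(ℝ)_e`, the identity component of `O(β)`. -/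
def Gset (d : ℕ) : Set (Mat d) := connectedComponentIn (Obeta d) 1

/-- Anti-de Sitter space `AdS^d = {x : β(x,x) = 1}`. -/
def AdS (d : ℕ) : Set (Vd d) := {x | betaB d x x = 1}

/-- Standard basis vector `e_i`. -/
def evec (d : ℕ) (i : Fin (d + 1)) : Vd d := fun j => if j = i then 1 else 0

/-- The positive causal cone `V₊(e₀)` at the base point. -/
def Vplus (d : ℕ) : Set (Vd d) :=
  {v | betaB d (evec d 0) v = 0 ∧ 0 < betaB d v v ∧ 0 < betaB d v (evec d 1)}

/-- A pair `(x,y)` with `x ∈ M`, `β(x,y) = 0` is positive if some `g ∈ G`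
moves it into the positive cone at the base point. -/
def posPair (d : ℕ) (x y : Vd d) : Prop :=
  ∃ g ∈ Gset d, g.mulVec x = evec d 0 ∧ g.mulVec y ∈ Vplus d

/-- Representing `z = x + iy ∈ V_ℂ` as the pair `(x,y)`: the set
`M_ℂ ∩ (V + i V_{>0})`. -/
def TubeSrc (d : ℕ) : Set (Vd d × Vd d) :=
  {p | betaB d p.1 p.1 - betaB d p.2 p.2 = 1 ∧ betaB d p.1 p.2 = 0 ∧ 0 < betaB d p.2 p.2}

/-- The positive tube domain `𝒯_M⁺`: those `z = x + iy` in `M_ℂ ∩ 𝒯_V` for which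
`Γ(z) = β(x,x)^{-1/2}(x,y)` is a positive pair. -/
def TubePlus (d : ℕ) : Set (Vd d × Vd d) :=
  {p | p ∈ TubeSrc d ∧
    posPair d ((Real.sqrt (betaB d p.1 p.1))⁻¹ • p.1) ((Real.sqrt (betaB d p.1 p.1))⁻¹ • p.2)}

/-- The involution `τ_h = diag(1,−1,−1,1,…,1)`. -/
def tauh (d : ℕ) : Mat d :=
  Matrix.diagonal fun j : Fin (d + 1) => if (j : ℕ) = 1 ∨ (j : ℕ) = 2 then (-1 : ℝ) else 1

/-- The Euler element `h` with `h e₁ = e₂`, `h e₂ = e₁`, `h e_j = 0` otherwise. -/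
def hmat (d : ℕ) : Mat d :=
  Matrix.of fun i j : Fin (d + 1) =>
    if ((i : ℕ) = 1 ∧ (j : ℕ) = 2) ∨ ((i : ℕ) = 2 ∧ (j : ℕ) = 1) then (1 : ℝ) else 0

/-- The centralizer `G^h = {g ∈ G : gh = hg}`. -/
def Gh (d : ℕ) : Set (Mat d) := {g ∈ Gset d | g * hmat d = hmat d * g}

/-- The positivity domain `W_M⁺(h) = {x ∈ M : (x, hx) is positive}`. -/
def WplusDom (d : ℕ) : Set (Vd d) := {x ∈ AdS d | posPair d x ((hmat d).mulVec x)}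

/-- `α_{it}(x) = (x₀, cos t·x₁ + i sin t·x₂, cos t·x₂ + i sin t·x₁, x₃, …, x_d)`,
written as a pair (real part, imaginary part). -/
def alphaIt (d : ℕ) (t : ℝ) (x : Vd d) : Vd d × Vd d :=
  (fun j => if (j : ℕ) = 1 ∨ (j : ℕ) = 2 then Real.cos t * x j else x j,
   fun j => if (j : ℕ) = 1 then Real.sin t * x 2
            else if (j : ℕ) = 2 then Real.sin t * x 1 else 0)

/-- The KMS wedge domain `W_M^{KMS}(h)`. -/
def KMSdom (d : ℕ) : Set (Vd d) :=
  {x ∈ AdS d | ∀ t : ℝ, 0 < t → t < Real.pi → alphaIt d t x ∈ TubePlus d}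

/-- `r₀₁ = diag(−1,−1,1,…,1)`. -/
def r01 (d : ℕ) : Mat d :=
  Matrix.diagonal fun j : Fin (d + 1) => if (j : ℕ) ≤ 1 then (-1 : ℝ) else 1

/-!
Let `η` be the Gram matrix of `β`, so that `g ∈ O(β)` iff `gᵀ η g = η`, and then `g⁻¹ = η gᵀ η`.
If `g` commutes with `τ_h` it commutes with the projection `π = (1 - τ_h)/2` onto `span(e₁, e₂)`,
so `Y = g h g⁻¹` is supported on that plane. It also lies in `so(β)` (that is, `η Y` is skew), and
the only such matrices are the multiples of `h`. Since `h² = π`, `Y² = g π g⁻¹ = π`, which forces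
`Y = ±h`. Finally `r₀₁` is the rotation by `π` in the positive definite `(e₀, e₁)`-plane, so it is
joined to `1` inside `O(β)` by the path of rotations in that plane.
-/

open Matrix Real

namespace AdSEuler

variable {d : ℕ}

def betaGram (d : ℕ) : Mat d := diagonal fun j => if (j : ℕ) ≤ 1 then 1 else -1

def projH (d : ℕ) : Mat d := diagonal fun j => if (j : ℕ) = 1 ∨ (j : ℕ) = 2 then 1 else 0

lemma transpose_mul_mul_transpose_of_transpose_eq_neg {n R : Type*} [Fintype n] [CommRing R]
    (A : Matrix n n R) {S : Matrix n n R} (hS : Sᵀ = -S) : (A * S * Aᵀ)ᵀ = -(A * S * Aᵀ) := by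
  simp [transpose_mul, hS, mul_assoc]

lemma betaGram_transpose : (betaGram d)ᵀ = betaGram d := diagonal_transpose _

lemma betaGram_mul_self : betaGram d * betaGram d = 1 := by
  rw [betaGram, diagonal_mul_diagonal, ← diagonal_one]
  congr 1; funext j; split_ifs <;> norm_num

lemma betaB_eq_dotProduct (x y : Vd d) : betaB d x y = x ⬝ᵥ betaGram d *ᵥ y := by
  simp only [betaB, betaGram, mulVec_diagonal, dotProduct]
  exact Finset.sum_congr rfl fun j _ => by ring

lemma betaB_mulVec_mulVec (g : Mat d) (x y : Vd d) :
    betaB d (g *ᵥ x) (g *ᵥ y) = x ⬝ᵥ (gᵀ * betaGram d * g) *ᵥ y := by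
  rw [betaB_eq_dotProduct, ← mulVec_mulVec, ← mulVec_mulVec, dotProduct_mulVec x,
    vecMul_transpose]

lemma forall_betaB_mulVec_iff (g : Mat d) :
    (∀ x y : Vd d, betaB d (g *ᵥ x) (g *ᵥ y) = betaB d x y) ↔
      gᵀ * betaGram d * g = betaGram d := by
  simp_rw [betaB_mulVec_mulVec, betaB_eq_dotProduct]
  refine ⟨fun h => ?_, fun h => by simp [h]⟩
  ext i j
  simpa using h (Pi.single i 1) (Pi.single j 1)

lemma betaGram_mul_transpose_mul_betaGram_mul {g : Mat d}
    (hg : gᵀ * betaGram d * g = betaGram d) : betaGram d * gᵀ * betaGram d * g = 1 := by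
  rw [mul_assoc, mul_assoc, ← mul_assoc gᵀ, hg, betaGram_mul_self]

lemma mem_Obeta_iff {g : Mat d} : g ∈ Obeta d ↔ gᵀ * betaGram d * g = betaGram d := by
  rw [Obeta, Set.mem_ofPred_eq, forall_betaB_mulVec_iff]
  exact ⟨And.right, fun hg =>
    ⟨.of_mul_eq_one_right _ (betaGram_mul_transpose_mul_betaGram_mul hg), hg⟩⟩

def betaAdj (g : Mat d) : Mat d := betaGram d * gᵀ * betaGram d

lemma betaAdj_mul {g : Mat d} (hg : g ∈ Obeta d) : betaAdj g * g = 1 :=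
  betaGram_mul_transpose_mul_betaGram_mul (mem_Obeta_iff.mp hg)

lemma mul_betaAdj {g : Mat d} (hg : g ∈ Obeta d) : g * betaAdj g = 1 :=
  mul_eq_one_comm.mp (betaAdj_mul hg)

lemma projH_eq : projH d = (2 : ℝ)⁻¹ • (1 - tauh d) := by
  ext ⟨_ | _ | _ | i, hi⟩ ⟨_ | _ | _ | j, hj⟩ <;>
    simp [projH, tauh, diagonal_apply, one_apply] <;> norm_num

lemma hmat_transpose : (hmat d)ᵀ = hmat d := by
  ext i j
  simp only [hmat, transpose_apply, of_apply]
  exact if_congr (by tauto) rfl rfl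

lemma hmat_mul_betaGram : hmat d * betaGram d = -(betaGram d * hmat d) := by
  ext ⟨_ | _ | _ | i, hi⟩ ⟨_ | _ | _ | j, hj⟩ <;> simp [hmat, betaGram]

lemma projH_mul_hmat : projH d * hmat d = hmat d := by
  ext ⟨_ | _ | _ | i, hi⟩ ⟨_ | _ | _ | j, hj⟩ <;> simp [hmat, projH]

lemma hmat_mul_projH : hmat d * projH d = hmat d := by
  ext ⟨_ | _ | _ | i, hi⟩ ⟨_ | _ | _ | j, hj⟩ <;> simp [hmat, projH]

lemma hmat_mul_hmat (hd : 2 ≤ d) : hmat d * hmat d = projH d := by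
  ext i j
  rw [mul_apply, Finset.sum_eq_add (⟨1, by omega⟩ : Fin (d + 1)) ⟨2, by omega⟩ (by simp) ?_
    (by simp) (by simp)]
  · rcases i with ⟨_ | _ | _ | i, hi⟩ <;> rcases j with ⟨_ | _ | _ | j, hj⟩ <;>
      simp [hmat, projH, diagonal_apply]
  · rintro ⟨_ | _ | _ | k, hk⟩ _ hk' <;> simp_all [hmat, Fin.ext_iff]

lemma hmat_ne_zero (hd : 2 ≤ d) : hmat d ≠ 0 := fun h => by
  simpa [hmat] using congrFun₂ h ⟨1, by omega⟩ ⟨2, by omega⟩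

lemma exists_eq_smul_hmat (hd : 2 ≤ d) {Y : Mat d} (hY : projH d * Y * projH d = Y)
    (hskew : (betaGram d * Y)ᵀ = -(betaGram d * Y)) : ∃ c : ℝ, Y = c • hmat d := by
  refine ⟨Y ⟨1, by omega⟩ ⟨2, by omega⟩, ?_⟩
  ext i j
  have hsupp := congrFun₂ hY i j
  have hij := congrFun₂ hskew i j
  simp only [projH, betaGram, mul_diagonal, diagonal_mul, transpose_apply] at hsupp hij
  rcases i with ⟨_ | _ | _ | i, hi⟩ <;> rcases j with ⟨_ | _ | _ | j, hj⟩ <;>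
    simp [hmat] at hsupp hij ⊢ <;> linarith

lemma commute_projH_of_commute_tauh {g : Mat d} (hτ : Commute g (tauh d)) :
    Commute g (projH d) := by
  rw [projH_eq]
  exact ((Commute.one_right g).sub_right hτ).smul_right _

lemma betaGram_mul_conj_hmat_transpose (g : Mat d) :
    (betaGram d * (g * hmat d * betaAdj g))ᵀ = -(betaGram d * (g * hmat d * betaAdj g)) := by
  have hS : (hmat d * betaGram d)ᵀ = -(hmat d * betaGram d) := by
    rw [transpose_mul, hmat_transpose, betaGram_transpose, hmat_mul_betaGram, neg_neg]
  have hconj : betaGram d * (g * hmat d * betaAdj g) =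
      (betaGram d * g) * (hmat d * betaGram d) * (betaGram d * g)ᵀ := by
    simp only [betaAdj, transpose_mul, betaGram_transpose, mul_assoc]
  rw [hconj, transpose_mul_mul_transpose_of_transpose_eq_neg _ hS]

lemma projH_mul_conj_hmat_mul_projH {g : Mat d} (hg : g ∈ Obeta d)
    (hπ : Commute g (projH d)) :
    projH d * (g * hmat d * betaAdj g) * projH d = g * hmat d * betaAdj g := by
  have hπ' : Commute (betaAdj g) (projH d) :=
    hπ.units_inv_left (u := ⟨g, betaAdj g, mul_betaAdj hg, betaAdj_mul hg⟩)
  calc projH d * (g * hmat d * betaAdj g) * projH d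
        = projH d * g * hmat d * (betaAdj g * projH d) := by simp only [mul_assoc]
    _ = g * (projH d * hmat d * projH d) * betaAdj g := by
        rw [← hπ.eq, hπ'.eq]; simp only [mul_assoc]
    _ = g * hmat d * betaAdj g := by rw [projH_mul_hmat, hmat_mul_projH]

lemma conj_hmat_mul_self (hd : 2 ≤ d) {g : Mat d} (hg : g ∈ Obeta d)
    (hπ : Commute g (projH d)) :
    g * hmat d * betaAdj g * (g * hmat d * betaAdj g) = projH d := by
  calc g * hmat d * betaAdj g * (g * hmat d * betaAdj g)
        = g * (hmat d * (betaAdj g * g) * hmat d) * betaAdj g := by simp only [mul_assoc]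
    _ = projH d := by
        rw [betaAdj_mul hg, mul_one, hmat_mul_hmat hd, hπ.eq, mul_assoc, mul_betaAdj hg, mul_one]

lemma mul_hmat_eq_or_eq_neg (hd : 2 ≤ d) {g : Mat d} (hg : g ∈ Obeta d)
    (hτ : Commute g (tauh d)) : g * hmat d = hmat d * g ∨ g * hmat d = -(hmat d * g) := by
  have hπ := commute_projH_of_commute_tauh hτ
  obtain ⟨c, hc⟩ := exists_eq_smul_hmat hd (projH_mul_conj_hmat_mul_projH hg hπ)
    (betaGram_mul_conj_hmat_transpose g)
  have hc2 : c * c = 1 := by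
    have hsq := conj_hmat_mul_self hd hg hπ
    rw [hc, smul_mul_smul, hmat_mul_hmat hd] at hsq
    simpa [projH] using congrFun₂ hsq ⟨1, by omega⟩ ⟨1, by omega⟩
  have hgh : g * hmat d = c • (hmat d * g) := by
    calc g * hmat d = g * hmat d * betaAdj g * g := by
          rw [mul_assoc _ (betaAdj g), betaAdj_mul hg, mul_one]
      _ = _ := by rw [hc, smul_mul_assoc]
  rcases mul_self_eq_one_iff.mp hc2 with rfl | rfl
  · exact .inl (by rw [hgh, one_smul])
  · exact .inr (by rw [hgh, neg_one_smul])

lemma mul_hmat_ne_neg (hd : 2 ≤ d) {g : Mat d} (hg : IsUnit g)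
    (hcomm : g * hmat d = hmat d * g) : g * hmat d ≠ -(hmat d * g) := by
  have := IsAddTorsionFree.of_module_rat (Mat d)
  rw [hcomm, Ne, self_eq_neg, hg.mul_left_eq_zero]
  exact hmat_ne_zero hd

def rot01 (d : ℕ) (t : ℝ) : Mat d := of fun i j =>
  if (i : ℕ) = 0 ∧ (j : ℕ) = 0 then cos t
  else if (i : ℕ) = 0 ∧ (j : ℕ) = 1 then -sin t
  else if (i : ℕ) = 1 ∧ (j : ℕ) = 0 then sin t
  else if (i : ℕ) = 1 ∧ (j : ℕ) = 1 then cos t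
  else if i = j then 1 else 0

lemma rot01_transpose_mul_betaGram_mul (hd : 1 ≤ d) (t : ℝ) :
    (rot01 d t)ᵀ * betaGram d * rot01 d t = betaGram d := by
  obtain ⟨n, rfl⟩ := Nat.exists_eq_add_of_le' hd
  have h1 : ∀ x : Fin n, x.succ.succ ≠ 1 := fun x h => by simp [Fin.ext_iff] at h
  ext i j
  simp only [mul_apply, transpose_apply, betaGram, Fin.sum_univ_succ, rot01, of_apply]
  refine Fin.cases ?_ (Fin.cases ?_ fun i => ?_) i <;>
    refine Fin.cases ?_ (Fin.cases ?_ fun j => ?_) j <;>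
    simp [diagonal_apply, h1, (h1 _).symm, (Fin.succ_ne_zero _).symm] <;>
    grind [sin_sq_add_cos_sq]

lemma continuous_rot01 : Continuous (rot01 d) := by
  refine continuous_matrix fun i j => ?_
  simp only [rot01, of_apply]
  split_ifs <;> fun_prop

lemma rot01_zero : rot01 d 0 = 1 := by
  ext ⟨_ | _ | i, hi⟩ ⟨_ | _ | j, hj⟩ <;> simp [rot01, one_apply]

lemma rot01_pi : rot01 d π = r01 d := by
  ext ⟨_ | _ | i, hi⟩ ⟨_ | _ | j, hj⟩ <;> simp [rot01, r01, diagonal_apply]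

lemma r01_mem_Gset (hd : 1 ≤ d) : r01 d ∈ Gset d := by
  refine (isPreconnected_range continuous_rot01).subset_connectedComponentIn
    ⟨0, rot01_zero⟩ ?_ ⟨π, rot01_pi⟩
  rintro _ ⟨t, rfl⟩
  exact mem_Obeta_iff.mpr (rot01_transpose_mul_betaGram_mul hd t)

lemma r01_mul_hmat : r01 d * hmat d = -(hmat d * r01 d) := by
  ext ⟨_ | _ | _ | i, hi⟩ ⟨_ | _ | _ | j, hj⟩ <;> simp [hmat, r01]

end AdSEuler

open AdSEuler

/-- Every `g ∈ G` commuting with `τ_h` satisfies `ghg⁻¹ = h` or `ghg⁻¹ = −h`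
(equivalently `gh = hg` or `gh = −hg`); `r₀₁ ∈ G^{τ_h}` satisfies `r₀₁ h r₀₁⁻¹ = −h`.
Hence `Ad(G^{τ_h})h = {h,−h}` and `G^{τ_h} ∖ G^h = {g ∈ G^{τ_h} : ghg⁻¹ = −h}`. -/
theorem stmt16 (d : ℕ) (hd : 2 ≤ d) :
    (∀ g ∈ Gset d, g * tauh d = tauh d * g →
      g * hmat d = hmat d * g ∨ g * hmat d = -(hmat d * g)) ∧
    (r01 d ∈ Gset d ∧ r01 d * tauh d = tauh d * r01 d ∧
      r01 d * hmat d = -(hmat d * r01 d)) ∧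
    {g ∈ Gset d | g * tauh d = tauh d * g} \ {g ∈ Gset d | g * hmat d = hmat d * g} =
      {g ∈ Gset d | g * tauh d = tauh d * g ∧ g * hmat d = -(hmat d * g)} := by
  have hO : Gset d ⊆ Obeta d := connectedComponentIn_subset _ _
  refine ⟨fun g hg hτ => mul_hmat_eq_or_eq_neg hd (hO hg) hτ,
    ⟨r01_mem_Gset (by omega), commute_diagonal _ _, r01_mul_hmat⟩, ?_⟩
  ext g
  simp only [Set.mem_sdiff, Set.mem_ofPred_eq]
  constructor
  · rintro ⟨⟨hg, hτ⟩, hnot⟩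
    exact ⟨hg, hτ, (mul_hmat_eq_or_eq_neg hd (hO hg) hτ).resolve_left fun h => hnot ⟨hg, h⟩⟩
  · rintro ⟨hg, hτ, hanti⟩
    exact ⟨⟨hg, hτ⟩, fun ⟨_, hcomm⟩ => mul_hmat_ne_neg hd (hO hg).1 hcomm hanti⟩
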